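/- arXiv:2202.02684 — 9 statements merged into one kernel-verified Lean document; each statement's English description precedes it below -/
import Mathlib

section
/- Let p and q be probability vectors on a finite set of size N and let ε > 0 be such that q_i ≥ ε for all i. Then D(p‖q) ≤ (1/ε)(Σ_i |p_i − q_i|)², i.e., the Kullback–Leibler divergence is bounded above by the squared ℓ1 distance divided by ε. -/
/-!
Since `log x ≤ x - 1`, each term `p log (p/q)` is at most `p (p/q - 1) = (p - q)²/q + (p - q)`,
and the linear terms cancel after summation, so `D(p‖q)` is bounded by the χ²-divergence
`∑ (p - q)²/q`. Bounding `1/q` by `1/ε` and the sum of squares by the square of the sum of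
absolute values gives the claim.
-/

open Finset Real

lemma mul_log_div_le_sq_sub_div_add_sub {p q : ℝ} (hp : 0 ≤ p) (hq : 0 < q) :
    p * log (p / q) ≤ (p - q) ^ 2 / q + (p - q) := by
  have hpq : (p - q) ^ 2 / q + (p - q) = p * (p / q - 1) := by
    field_simp
    ring
  rw [hpq]
  rcases hp.eq_or_lt with rfl | hp
  · simp
  · exact mul_le_mul_of_nonneg_left (log_le_sub_one_of_pos (div_pos hp hq)) hp.le

lemma sum_mul_log_div_le_sum_sq_sub_div {ι : Type*} [Fintype ι] {p q : ι → ℝ}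
    (hp : ∀ i, 0 ≤ p i) (hq : ∀ i, 0 < q i) (hsum : ∑ i, p i = ∑ i, q i) :
    ∑ i, p i * log (p i / q i) ≤ ∑ i, (p i - q i) ^ 2 / q i :=
  calc ∑ i, p i * log (p i / q i)
      ≤ ∑ i, ((p i - q i) ^ 2 / q i + (p i - q i)) :=
        sum_le_sum fun i _ => mul_log_div_le_sq_sub_div_add_sub (hp i) (hq i)
    _ = ∑ i, (p i - q i) ^ 2 / q i := by
        rw [sum_add_distrib, sum_sub_distrib, hsum, sub_self, add_zero]

lemma sum_sq_div_le_one_div_mul_sq_sum_abs {ι : Type*} [Fintype ι] {x q : ι → ℝ} {ε : ℝ}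
    (hε : 0 < ε) (hqε : ∀ i, ε ≤ q i) :
    ∑ i, x i ^ 2 / q i ≤ 1 / ε * (∑ i, |x i|) ^ 2 :=
  calc ∑ i, x i ^ 2 / q i
      ≤ ∑ i, x i ^ 2 / ε :=
        sum_le_sum fun i _ => div_le_div_of_nonneg_left (sq_nonneg _) hε (hqε i)
    _ = 1 / ε * ∑ i, |x i| ^ 2 := by simp only [sq_abs, mul_sum, one_div_mul_eq_div]
    _ ≤ 1 / ε * (∑ i, |x i|) ^ 2 := by
        gcongr
        exact sum_sq_le_sq_sum_of_nonneg fun i _ => abs_nonneg _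

/-- For probability vectors `p, q` on a finite set of size `N` with
`q_i ≥ ε > 0`, the Kullback–Leibler divergence `D(p‖q) = ∑ p_i log (p_i / q_i)` satisfies the
reverse-Pinsker-type bound `D(p‖q) ≤ (1/ε) (∑_i |p_i − q_i|)²`. -/
theorem statement3 {N : ℕ} (p q : Fin N → ℝ) (ε : ℝ) (hε : 0 < ε)
    (hp0 : ∀ i, 0 ≤ p i) (hp1 : ∑ i, p i = 1)
    (hq1 : ∑ i, q i = 1) (hqε : ∀ i, ε ≤ q i) :
    ∑ i, p i * Real.log (p i / q i) ≤ (1 / ε) * (∑ i, |p i - q i|) ^ 2 :=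
  have hq : ∀ i, 0 < q i := fun i => hε.trans_le (hqε i)
  (sum_mul_log_div_le_sum_sq_sub_div hp0 hq (hp1.trans hq1.symm)).trans
    (sum_sq_div_le_one_div_mul_sq_sum_abs hε hqε)
end

section
/- Let p and q be probability vectors on a finite set of size N, with q_i ≥ ε > 0 and p_i > 0 for all i. Then H(p) − H(q) ≥ ⟨−(log q + 1), p − q⟩ − (N/ε)‖p − q‖₂², where log q + 1 denotes the vector with entries log q_i + 1 and ‖·‖₂ is the Euclidean norm. -/
/-!
The Bregman divergence of the entropy is minus the Kullback–Leibler divergence: for probability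
vectors, `H(p) - H(q) - ⟨∇H(q), p - q⟩ = -D(p‖q)`. From `log x ≤ x - 1` one gets
`D(p‖q) ≤ χ²(p‖q) = ∑ (p_i - q_i)² / q_i`, and `q_i ≥ ε` bounds this by `‖p - q‖₂² / ε`,
which is at most `(N/ε) ‖p - q‖₂²` since `N ≥ 1`.
-/

open Real Finset

variable {ι : Type*} [Fintype ι]

noncomputable def shannonEntropy (p : ι → ℝ) : ℝ := -∑ i, p i * log (p i)

noncomputable def relEntropy (p q : ι → ℝ) : ℝ := ∑ i, p i * log (p i / q i)

theorem shannonEntropy_sub_sub_inner_gradient_eq_neg_relEntropy {p q : ι → ℝ}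
    (hp : ∀ i, 0 < p i) (hq : ∀ i, 0 < q i) (hsum : ∑ i, p i = ∑ i, q i) :
    shannonEntropy p - shannonEntropy q - ∑ i, (-(log (q i) + 1)) * (p i - q i)
      = -relEntropy p q := by
  have hterm : ∀ i, -(p i * log (p i)) + q i * log (q i) - (-(log (q i) + 1)) * (p i - q i)
      = -(p i * log (p i / q i)) + (p i - q i) := fun i => by
    rw [log_div (hp i).ne' (hq i).ne']
    ring
  have hlin : ∑ i, (p i - q i) = 0 := by rw [sum_sub_distrib, hsum, sub_self]
  calc _ = ∑ i, (-(p i * log (p i)) + q i * log (q i) - (-(log (q i) + 1)) * (p i - q i)) := by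
        simp only [shannonEntropy, sum_sub_distrib, sum_add_distrib, sum_neg_distrib]
        ring
    _ = ∑ i, (-(p i * log (p i / q i)) + (p i - q i)) := sum_congr rfl fun i _ => hterm i
    _ = -relEntropy p q := by rw [sum_add_distrib, hlin, add_zero, sum_neg_distrib, relEntropy]

theorem mul_log_div_le_sq_div_add_sub {x y : ℝ} (hx : 0 ≤ x) (hy : 0 < y) :
    x * log (x / y) ≤ (x - y) ^ 2 / y + (x - y) := by
  rcases hx.eq_or_lt with rfl | hx
  · simp [sq, hy.ne']
  calc x * log (x / y) ≤ x * (x / y - 1) :=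
        mul_le_mul_of_nonneg_left (log_le_sub_one_of_pos (div_pos hx hy)) hx.le
    _ = (x - y) ^ 2 / y + (x - y) := by
        field_simp
        ring

theorem relEntropy_le_chiSquare {p q : ι → ℝ} (hp : ∀ i, 0 ≤ p i) (hq : ∀ i, 0 < q i)
    (hsum : ∑ i, p i = ∑ i, q i) :
    relEntropy p q ≤ ∑ i, (p i - q i) ^ 2 / q i :=
  calc relEntropy p q ≤ ∑ i, ((p i - q i) ^ 2 / q i + (p i - q i)) :=
        sum_le_sum fun i _ => mul_log_div_le_sq_div_add_sub (hp i) (hq i)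
    _ = ∑ i, (p i - q i) ^ 2 / q i := by
        rw [sum_add_distrib, sum_sub_distrib, hsum, sub_self, add_zero]

theorem sum_div_le_sum_div_of_le {f q : ι → ℝ} {ε : ℝ} (hf : ∀ i, 0 ≤ f i) (hε : 0 < ε)
    (hq : ∀ i, ε ≤ q i) :
    ∑ i, f i / q i ≤ (∑ i, f i) / ε := by
  rw [sum_div]
  exact sum_le_sum fun i _ => div_le_div_of_nonneg_left (hf i) hε (hq i)

/-- For probability vectors `p, q` on a finite set of size `N` with
`q_i ≥ ε > 0` and `p_i > 0`, the entropies satisfy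
`H(p) − H(q) ≥ ⟨−(log q + 1), p − q⟩ − (N/ε) ‖p − q‖₂²`, where `−(log q + 1)` is the
gradient of the entropy at `q` and `‖·‖₂` is the Euclidean norm. -/
theorem statement4 {N : ℕ} (p q : Fin N → ℝ) (ε : ℝ) (hε : 0 < ε)
    (hp0 : ∀ i, 0 < p i) (hqε : ∀ i, ε ≤ q i)
    (hp1 : ∑ i, p i = 1) (hq1 : ∑ i, q i = 1) :
    (-∑ i, p i * Real.log (p i)) - (-∑ i, q i * Real.log (q i))
      ≥ (∑ i, (-(Real.log (q i) + 1)) * (p i - q i))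
        - ((N : ℝ) / ε) * ∑ i, (p i - q i) ^ 2 := by
  have hq0 : ∀ i, 0 < q i := fun i => hε.trans_le (hqε i)
  have hsum : ∑ i, p i = ∑ i, q i := hp1.trans hq1.symm
  have hN : (1 : ℝ) ≤ N := by
    have : N ≠ 0 := by rintro rfl; simp at hp1
    exact_mod_cast Nat.one_le_iff_ne_zero.mpr this
  have hgap := shannonEntropy_sub_sub_inner_gradient_eq_neg_relEntropy hp0 hq0 hsum
  have hrel : relEntropy p q ≤ (∑ i, (p i - q i) ^ 2) / ε :=
    (relEntropy_le_chiSquare (fun i => (hp0 i).le) hq0 hsum).trans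
      (sum_div_le_sum_div_of_le (fun i => sq_nonneg _) hε hqε)
  have hcard : (∑ i, (p i - q i) ^ 2) / ε ≤ (N / ε) * ∑ i, (p i - q i) ^ 2 := by
    rw [div_mul_eq_mul_div]
    gcongr
    exact le_mul_of_one_le_left (sum_nonneg fun i _ => sq_nonneg _) hN
  unfold shannonEntropy at hgap
  linarith
end

section
/- Let Z, Y be finite sets with |Z| = N_z, |Y| = N_y, let π be a probability vector on Y, and let P^m, P^n be collections of probability vectors on Z indexed by y ∈ Y (conditional distributions), with P^n(z|y) ≥ ε > 0 and P^m(z|y) > 0 for all z, y. Then Σ_y π_y [H(P^m(·|y)) − H(P^n(·|y))] ≥ Σ_y π_y ⟨−(log P^n(·|y) + 1), P^m(·|y) − P^n(·|y)⟩ − (N_z N_y/ε) Σ_y ‖P^m(·|y) − P^n(·|y)‖₂². -/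
/-!
The function `negMulLog x = -x log x` has derivative `-(log b + 1)` at `b`, and its gap below
that tangent line is the Bregman divergence `a log (a / b) - a + b`; the inequality
`log t ≤ t - 1` bounds it by the χ²-term `(a - b)² / b ≤ (a - b)² / ε`. Summing over `z` and
weighting by `π_y ≤ 1 ≤ N_z N_y` gives the claim.
-/

open Finset

namespace Real

theorem negMulLog_sub_ge_tangent_sub_sq_div {a b : ℝ} (ha : 0 ≤ a) (hb : 0 < b) :
    -(log b + 1) * (a - b) - (a - b) ^ 2 / b ≤ negMulLog a - negMulLog b := by
  have hlog : a * (log a - log b) ≤ a * (a / b - 1) := by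
    rcases ha.eq_or_lt with rfl | ha
    · simp
    · rw [← log_div ha.ne' hb.ne']
      exact mul_le_mul_of_nonneg_left (log_le_sub_one_of_pos (div_pos ha hb)) ha.le
  have hsq : a * (a / b - 1) = (a - b) ^ 2 / b + a - b := by field_simp; ring
  simp only [negMulLog]
  linear_combination hlog + hsq

theorem sum_negMulLog_sub_ge_tangent_sub_sq_div {ι : Type*} [Fintype ι] {p q : ι → ℝ} {ε : ℝ}
    (hε : 0 < ε) (hp : ∀ i, 0 ≤ p i) (hq : ∀ i, ε ≤ q i) :
    ∑ i, -(log (q i) + 1) * (p i - q i) - (∑ i, (p i - q i) ^ 2) / ε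
      ≤ ∑ i, negMulLog (p i) - ∑ i, negMulLog (q i) := by
  rw [sum_div, ← sum_sub_distrib, ← sum_sub_distrib]
  refine sum_le_sum fun i _ ↦ ?_
  calc -(log (q i) + 1) * (p i - q i) - (p i - q i) ^ 2 / ε
      ≤ -(log (q i) + 1) * (p i - q i) - (p i - q i) ^ 2 / q i := by
        gcongr
        exact hq i
    _ ≤ negMulLog (p i) - negMulLog (q i) :=
        negMulLog_sub_ge_tangent_sub_sq_div (hp i) (hε.trans_le (hq i))

theorem sum_negMulLog_eq_neg_sum_mul_log {ι : Type*} [Fintype ι] (p : ι → ℝ) :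
    ∑ i, negMulLog (p i) = -∑ i, p i * log (p i) := by
  simp [negMulLog]

end Real

theorem sum_mul_le_sum_of_sum_eq_one {ι : Type*} [Fintype ι] {w s : ι → ℝ}
    (hw0 : ∀ i, 0 ≤ w i) (hw1 : ∑ i, w i = 1) (hs : ∀ i, 0 ≤ s i) :
    ∑ i, w i * s i ≤ ∑ i, s i := by
  refine sum_le_sum fun i _ ↦ mul_le_of_le_one_left (hs i) ?_
  exact hw1 ▸ single_le_sum (fun j _ ↦ hw0 j) (mem_univ i)

theorem statement5_general {Z Y : Type*} [Fintype Z] [Fintype Y]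
    (π : Y → ℝ) (hπ0 : ∀ y, 0 ≤ π y) (hπ1 : ∑ y, π y = 1)
    (Pm Pn : Y → Z → ℝ) (ε : ℝ) (hε : 0 < ε)
    (hPm0 : ∀ y z, 0 < Pm y z) (hPnε : ∀ y z, ε ≤ Pn y z) :
    ∑ y, π y * ((-∑ z, Pm y z * Real.log (Pm y z)) - (-∑ z, Pn y z * Real.log (Pn y z)))
      ≥ (∑ y, π y * ∑ z, (-(Real.log (Pn y z) + 1)) * (Pm y z - Pn y z))
        - ((Fintype.card Z : ℝ) * (Fintype.card Y : ℝ) / ε) *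
            ∑ y, ∑ z, (Pm y z - Pn y z) ^ 2 := by
  rcases isEmpty_or_nonempty Z with _ | _
  · simp
  have : Nonempty Y := univ_nonempty_iff.mp (nonempty_of_sum_ne_zero (hπ1 ▸ one_ne_zero))
  have hcard : (1 : ℝ) ≤ Fintype.card Z * Fintype.card Y :=
    one_le_mul_of_one_le_of_one_le (mod_cast Fintype.card_pos) (mod_cast Fintype.card_pos)
  have hrow (y : Y) := Real.sum_negMulLog_sub_ge_tangent_sub_sq_div hε
    (fun z ↦ (hPm0 y z).le) (hPnε y)
  simp only [Real.sum_negMulLog_eq_neg_sum_mul_log] at hrow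
  have hweighted : ∑ y, π y * ∑ z, (Pm y z - Pn y z) ^ 2 ≤
      Fintype.card Z * Fintype.card Y * ∑ y, ∑ z, (Pm y z - Pn y z) ^ 2 :=
    (sum_mul_le_sum_of_sum_eq_one hπ0 hπ1 fun y ↦ sum_nonneg fun z _ ↦ sq_nonneg _).trans
      (le_mul_of_one_le_left (sum_nonneg fun y _ ↦ sum_nonneg fun z _ ↦ sq_nonneg _) hcard)
  calc ∑ y, π y * ∑ z, -(Real.log (Pn y z) + 1) * (Pm y z - Pn y z)
        - ((Fintype.card Z : ℝ) * (Fintype.card Y : ℝ) / ε) * ∑ y, ∑ z, (Pm y z - Pn y z) ^ 2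
      ≤ ∑ y, π y * ∑ z, -(Real.log (Pn y z) + 1) * (Pm y z - Pn y z)
          - (∑ y, π y * ∑ z, (Pm y z - Pn y z) ^ 2) / ε := by
        rw [div_mul_eq_mul_div]
        gcongr
    _ = ∑ y, π y * (∑ z, -(Real.log (Pn y z) + 1) * (Pm y z - Pn y z)
          - (∑ z, (Pm y z - Pn y z) ^ 2) / ε) := by
        simp only [mul_sub, sum_sub_distrib, sum_div, mul_div_assoc]
    _ ≤ _ := sum_le_sum fun y _ ↦ mul_le_mul_of_nonneg_left (hrow y) (hπ0 y)

/-- Conditional-entropy half of the weak-convexity lemma: for finite sets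
`Z, Y` with `|Z| = N_z`, `|Y| = N_y`, a probability vector `π` on `Y`, and conditional
distributions `P^m(·|y), P^n(·|y)` on `Z` with `P^n(z|y) ≥ ε > 0` and `P^m(z|y) > 0`,
`∑_y π_y [H(P^m(·|y)) − H(P^n(·|y))]
  ≥ ∑_y π_y ⟨−(log P^n(·|y) + 1), P^m(·|y) − P^n(·|y)⟩ − (N_z N_y / ε) ∑_y ‖P^m(·|y) − P^n(·|y)‖₂²`. -/
theorem statement5 {Z Y : Type*} [Fintype Z] [Fintype Y]
    (π : Y → ℝ) (hπ0 : ∀ y, 0 ≤ π y) (hπ1 : ∑ y, π y = 1)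
    (Pm Pn : Y → Z → ℝ) (ε : ℝ) (hε : 0 < ε)
    (hPm0 : ∀ y z, 0 < Pm y z) (hPnε : ∀ y z, ε ≤ Pn y z)
    (hPm1 : ∀ y, ∑ z, Pm y z = 1) (hPn1 : ∀ y, ∑ z, Pn y z = 1) :
    ∑ y, π y * ((-∑ z, Pm y z * Real.log (Pm y z)) - (-∑ z, Pn y z * Real.log (Pn y z)))
      ≥ (∑ y, π y * ∑ z, (-(Real.log (Pn y z) + 1)) * (Pm y z - Pn y z))
        - ((Fintype.card Z : ℝ) * (Fintype.card Y : ℝ) / ε) *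
            ∑ y, ∑ z, (Pm y z - Pn y z) ^ 2 :=
  statement5_general π hπ0 hπ1 Pm Pn ε hε hPm0 hPnε
end

section
/- Let Z, Y be finite sets with |Z| = N_z, |Y| = N_y, let π be a probability vector on Y, let σ_γ ∈ ℝ, and let ε_z, ε_{z|y} > 0. Define G(q) = σ_γ H(p_z) + Σ_y π_y H(p_{z|y}) for q = (p_z, (p_{z|y})_{y∈Y}) ranging over tuples of probability vectors on Z with p_z(z) ≥ ε_z and p_{z|y}(z) ≥ ε_{z|y} for all z, y. Then G is σ_G-weakly convex on this set with σ_G = max{2N_z|σ_γ|/ε_z, 2N_zN_y/ε_{z|y}}; i.e., for all q^m, q^n in the set, G(q^m) ≥ G(q^n) + ⟨∇G(q^n), q^m − q^n⟩ − (σ_G/2)‖q^m − q^n‖₂². -/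
/-!
Each summand of `G` is a weight times `negMulLog` of one coordinate, and for `b > 0` the
first-order Taylor remainder of `negMulLog` at `b` lies in `[-(a - b)² / b, 0]` (the two
sides of `log x ≤ x - 1`). On the box `q ≥ ε` the remainder of a summand with weight `w`
is thus at least `-(|w| / ε) (a - b)²`; as `|σ_γ| ≤ N_z |σ_γ|` and `π_y ≤ 1 ≤ N_z N_y`, summing
over the coordinates gives the claim.
-/

open RealInnerProductSpace

section WeightedEntropy

open Real

lemma abs_negMulLog_sub_sub_le {a b : ℝ} (ha : 0 < a) (hb : 0 < b) :
    |negMulLog a - negMulLog b - (-log b - 1) * (a - b)| ≤ (a - b) ^ 2 / b := by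
  have hremainder : negMulLog a - negMulLog b - (-log b - 1) * (a - b)
      = a * log (b / a) + (a - b) := by
    rw [log_div hb.ne' ha.ne', negMulLog, negMulLog]; ring
  have hupper : log (b / a) ≤ b / a - 1 := log_le_sub_one_of_pos (div_pos hb ha)
  have hlower : 1 - a / b ≤ log (b / a) := by
    have h := log_le_sub_one_of_pos (div_pos ha hb)
    rw [log_div ha.ne' hb.ne'] at h
    rw [log_div hb.ne' ha.ne']
    linarith
  have hupper' : a * log (b / a) ≤ b - a := by
    calc a * log (b / a) ≤ a * (b / a - 1) := mul_le_mul_of_nonneg_left hupper ha.le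
      _ = b - a := by field_simp
  have hlower' : -((a - b) ^ 2 / b) - (a - b) ≤ a * log (b / a) := by
    calc -((a - b) ^ 2 / b) - (a - b) = a * (1 - a / b) := by field_simp; ring
      _ ≤ a * log (b / a) := mul_le_mul_of_nonneg_left hlower ha.le
  rw [hremainder, abs_le]
  constructor
  · linarith
  · linarith [div_nonneg (sq_nonneg (a - b)) hb.le]

variable {ι : Type*} [Fintype ι]

noncomputable def weightedEntropy (w : ι → ℝ) (p : EuclideanSpace ℝ ι) : ℝ :=
  ∑ i, w i * negMulLog (p i)

lemma hasGradientAt_weightedEntropy (w : ι → ℝ) {q : EuclideanSpace ℝ ι} (hq : ∀ i, q i ≠ 0) :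
    HasGradientAt (weightedEntropy w) (WithLp.toLp 2 fun i ↦ w i * (-log (q i) - 1)) q := by
  rw [hasGradientAt_iff_hasFDerivAt]
  have hsum : HasFDerivAt (weightedEntropy w)
      (∑ i, (w i * (-log (q i) - 1)) • (EuclideanSpace.proj i : EuclideanSpace ℝ ι →L[ℝ] ℝ))
      q := by
    refine HasFDerivAt.fun_sum fun i _ ↦ ?_
    have hderiv : HasDerivAt (fun t ↦ w i * negMulLog t) (w i * (-log (q i) - 1)) (q i) :=
      (hasDerivAt_negMulLog (hq i)).const_mul (w i)
    have hproj : HasFDerivAt (fun p : EuclideanSpace ℝ ι ↦ p i)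
        (EuclideanSpace.proj i : EuclideanSpace ℝ ι →L[ℝ] ℝ) q :=
      (EuclideanSpace.proj i : EuclideanSpace ℝ ι →L[ℝ] ℝ).hasFDerivAt
    exact (hderiv.comp_hasFDerivAt q hproj :)
  refine hsum.congr_fderiv (ContinuousLinearMap.ext fun v ↦ ?_)
  simp only [InnerProductSpace.toDual_apply_apply, PiLp.inner_apply,
    RCLike.inner_apply, conj_trivial, FunLike.coe_sum, Finset.sum_apply,
    FunLike.coe_smul, Pi.smul_apply, PiLp.proj_apply, smul_eq_mul]
  exact Finset.sum_congr rfl fun i _ ↦ mul_comm _ _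

lemma weightedEntropy_weakConvex (w ε : ι → ℝ) (σ : ℝ) (hε : ∀ i, 0 < ε i)
    (hσ : ∀ i, 2 * |w i| / ε i ≤ σ) {qm qn : EuclideanSpace ℝ ι}
    (hqm : ∀ i, 0 < qm i) (hqn : ∀ i, ε i ≤ qn i) :
    weightedEntropy w qn + ⟪gradient (weightedEntropy w) qn, qm - qn⟫ - σ / 2 * ‖qm - qn‖ ^ 2
      ≤ weightedEntropy w qm := by
  have hqn_pos : ∀ i, 0 < qn i := fun i ↦ (hε i).trans_le (hqn i)
  have hterm : ∀ i, w i * negMulLog (qn i) + w i * (-log (qn i) - 1) * (qm i - qn i)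
      - σ / 2 * (qm i - qn i) ^ 2 ≤ w i * negMulLog (qm i) := by
    intro i
    set r := negMulLog (qm i) - negMulLog (qn i) - (-log (qn i) - 1) * (qm i - qn i)
    have hr : |r| ≤ (qm i - qn i) ^ 2 / ε i :=
      (abs_negMulLog_sub_sub_le (hqm i) (hqn_pos i)).trans
        (div_le_div_of_nonneg_left (sq_nonneg _) (hε i) (hqn i))
    have hcoeff : |w i| / ε i ≤ σ / 2 := by linarith [hσ i, mul_div_assoc 2 |w i| (ε i)]
    calc w i * negMulLog (qn i) + w i * (-log (qn i) - 1) * (qm i - qn i)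
          - σ / 2 * (qm i - qn i) ^ 2
        = w i * negMulLog (qm i) - w i * r - σ / 2 * (qm i - qn i) ^ 2 := by ring
      _ ≤ w i * negMulLog (qm i) - w i * r - |w i| * |r| := by
        refine sub_le_sub_left ?_ _
        calc |w i| * |r| ≤ |w i| * ((qm i - qn i) ^ 2 / ε i) := by gcongr
          _ = |w i| / ε i * (qm i - qn i) ^ 2 := by ring
          _ ≤ σ / 2 * (qm i - qn i) ^ 2 := by gcongr
      _ ≤ w i * negMulLog (qm i) := by linarith [abs_mul (w i) r ▸ neg_abs_le (w i * r)]
  rw [(hasGradientAt_weightedEntropy w fun i ↦ (hqn_pos i).ne').gradient,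
    EuclideanSpace.norm_sq_eq, weightedEntropy, weightedEntropy, PiLp.inner_apply,
    Finset.mul_sum, ← Finset.sum_add_distrib, ← Finset.sum_sub_distrib]
  refine Finset.sum_le_sum fun i _ ↦ ?_
  simpa [mul_comm (qm i - qn i), mul_assoc] using hterm i

end WeightedEntropy

/-- Weak convexity of the sub-objective `G` of the multi-view IB augmented
Lagrangian. Encode `q = (p_z, (p_{z|y})_y)` as an element of `EuclideanSpace ℝ (Z ⊕ Z × Y)`
(component `Sum.inl z` is `p_z(z)`, component `Sum.inr (z,y)` is `p_{z|y}(z)`), and let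
`G(q) = σ_γ H(p_z) + ∑_y π_y H(p_{z|y})`. On the set of tuples of probability vectors with
`p_z(z) ≥ ε_z` and `p_{z|y}(z) ≥ ε_{z|y}`, `G` is `σ_G`-weakly convex with
`σ_G = max{2 N_z |σ_γ| / ε_z, 2 N_z N_y / ε_{z|y}}`. -/
theorem statement6 {Z Y : Type*} [Fintype Z] [Fintype Y]
    (π : Y → ℝ) (hπ0 : ∀ y, 0 ≤ π y) (hπ1 : ∑ y, π y = 1)
    (σγ εz εzy : ℝ) (hεz : 0 < εz) (hεzy : 0 < εzy)
    (G : EuclideanSpace ℝ (Z ⊕ Z × Y) → ℝ)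
    (hG : ∀ q : EuclideanSpace ℝ (Z ⊕ Z × Y),
      G q = σγ * (-∑ z, q (Sum.inl z) * Real.log (q (Sum.inl z)))
        + ∑ y, π y * (-∑ z, q (Sum.inr (z, y)) * Real.log (q (Sum.inr (z, y))))) :
    ∀ qm qn : EuclideanSpace ℝ (Z ⊕ Z × Y),
      (∑ z, qm (Sum.inl z) = 1) → (∀ y, ∑ z, qm (Sum.inr (z, y)) = 1) →
      (∀ z, εz ≤ qm (Sum.inl z)) → (∀ z y, εzy ≤ qm (Sum.inr (z, y))) →
      (∑ z, qn (Sum.inl z) = 1) → (∀ y, ∑ z, qn (Sum.inr (z, y)) = 1) →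
      (∀ z, εz ≤ qn (Sum.inl z)) → (∀ z y, εzy ≤ qn (Sum.inr (z, y))) →
      G qm ≥ G qn + ⟪gradient G qn, qm - qn⟫
        - (max (2 * (Fintype.card Z : ℝ) * |σγ| / εz)
               (2 * (Fintype.card Z : ℝ) * (Fintype.card Y : ℝ) / εzy)) / 2
          * ‖qm - qn‖ ^ 2 := by
  intro qm qn _ _ hqm_z hqm_zy _ _ hqn_z hqn_zy
  let w : Z ⊕ Z × Y → ℝ := Sum.elim (fun _ ↦ σγ) (fun p ↦ π p.2)
  let ε : Z ⊕ Z × Y → ℝ := Sum.elim (fun _ ↦ εz) (fun _ ↦ εzy)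
  have hGw : G = weightedEntropy w := funext fun q ↦ by
    simp only [hG, weightedEntropy, Fintype.sum_sum_type, Fintype.sum_prod_type, Real.negMulLog,
      w, Sum.elim_inl, Sum.elim_inr, Finset.mul_sum, ← Finset.sum_neg_distrib]
    rw [Finset.sum_comm (s := Finset.univ (α := Y))]
    ring_nf
  have hε : ∀ i, 0 < ε i := by rintro (_ | _) <;> assumption
  subst hGw
  refine weightedEntropy_weakConvex w ε _ hε ?_ (fun i ↦ (hε i).trans_le ?_) ?_
  · rintro (z | ⟨z, y⟩)
    · have hNz : (1 : ℝ) ≤ Fintype.card Z := Nat.one_le_cast.mpr (Fintype.card_pos_iff.mpr ⟨z⟩)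
      calc 2 * |σγ| / εz ≤ 2 * (Fintype.card Z : ℝ) * |σγ| / εz := by gcongr; linarith
        _ ≤ _ := le_max_left _ _
    · have hNz : (1 : ℝ) ≤ Fintype.card Z := Nat.one_le_cast.mpr (Fintype.card_pos_iff.mpr ⟨z⟩)
      have hNy : (1 : ℝ) ≤ Fintype.card Y := Nat.one_le_cast.mpr (Fintype.card_pos_iff.mpr ⟨y⟩)
      have hπy : π y ≤ 1 := hπ1 ▸ Finset.single_le_sum (fun y' _ ↦ hπ0 y') (Finset.mem_univ y)
      calc 2 * |π y| / εzy ≤ 2 * (Fintype.card Z : ℝ) * (Fintype.card Y : ℝ) / εzy := by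
            rw [abs_of_nonneg (hπ0 y)]
            exact div_le_div_of_nonneg_right (by nlinarith) hεzy.le
        _ ≤ _ := le_max_right _ _
  · rcases i with z | ⟨z, y⟩
    exacts [hqm_z z, hqm_zy z y]
  · rintro (z | ⟨z, y⟩)
    exacts [hqn_z z, hqn_zy z y]
end

section
/- Let p and q be probability vectors on a finite set of size N with all entries strictly positive. Then the negative entropy satisfies the strong-convexity inequality Σ_i p_i log p_i − Σ_i q_i log q_i ≥ ⟨log q + 1, p − q⟩ + (1/2)‖p − q‖₂², where log q + 1 is the vector with entries log q_i + 1. -/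
/-! Since `(x log x)'' = 1 / x ≥ 1` on `(0, 1]`, the function `x log x - x² / 2` is convex there.
Its tangent-line inequality at `q i`, evaluated at `p i`, is the claimed inequality coordinatewise,
and the entries of a probability vector lie in `(0, 1]`. -/

open Real Set

theorem ConvexOn.add_mul_sub_le_of_hasDerivAt {S : Set ℝ} {f : ℝ → ℝ} {f' x y : ℝ}
    (hf : ConvexOn ℝ S f) (hx : x ∈ S) (hy : y ∈ S) (hf' : HasDerivAt f f' x) :
    f x + f' * (y - x) ≤ f y := by
  rcases lt_trichotomy x y with hxy | rfl | hyx
  · have := hf.le_slope_of_hasDerivAt hx hy hxy hf'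
    rw [slope_def_field, le_div_iff₀ (sub_pos.mpr hxy)] at this
    linarith
  · simp
  · have := hf.slope_le_of_hasDerivAt hy hx hyx hf'
    rw [slope_def_field, div_le_iff₀ (sub_pos.mpr hyx)] at this
    linarith

theorem hasDerivAt_mul_log_sub_sq_div_two {x : ℝ} (hx : x ≠ 0) :
    HasDerivAt (fun x : ℝ ↦ x * log x - x ^ 2 / 2) (log x + 1 - x) x :=
  ((hasDerivAt_mul_log hx).sub ((hasDerivAt_pow 2 x).div_const 2)).congr_deriv (by ring)

theorem convexOn_mul_log_sub_sq_div_two :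
    ConvexOn ℝ (Ioc 0 1) (fun x : ℝ ↦ x * log x - x ^ 2 / 2) := by
  have hint : interior (Ioc (0 : ℝ) 1) = Ioo 0 1 := interior_Ioc
  refine convexOn_of_hasDerivWithinAt2_nonneg (convex_Ioc 0 1)
    (f' := fun x ↦ log x + 1 - x) (f'' := fun x ↦ x⁻¹ - 1)
    (continuous_mul_log.sub (continuous_pow 2 |>.div_const 2)).continuousOn ?_ ?_ ?_ <;>
    rw [hint] <;> intro x ⟨hx0, hx1⟩
  · exact (hasDerivAt_mul_log_sub_sq_div_two hx0.ne').hasDerivWithinAt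
  · exact (((hasDerivAt_log hx0.ne').add_const 1).sub (hasDerivAt_id x)).hasDerivWithinAt
  · simpa using one_le_inv₀ hx0 |>.mpr hx1.le

theorem mul_log_add_sq_div_two_le {a b : ℝ} (ha : a ∈ Ioc 0 1) (hb : b ∈ Ioc 0 1) :
    b * log b + (log b + 1) * (a - b) + (a - b) ^ 2 / 2 ≤ a * log a := by
  have := convexOn_mul_log_sub_sq_div_two.add_mul_sub_le_of_hasDerivAt hb ha
    (hasDerivAt_mul_log_sub_sq_div_two hb.1.ne')
  linear_combination this

/-- For probability vectors `p, q` on a finite set of size `N` with strictly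
positive entries, the negative entropy is `1`-strongly convex on the simplex with respect to
the Euclidean norm:
`∑ p_i log p_i − ∑ q_i log q_i ≥ ⟨log q + 1, p − q⟩ + (1/2) ‖p − q‖₂²`. -/
theorem statement7 {N : ℕ} (p q : Fin N → ℝ)
    (hp0 : ∀ i, 0 < p i) (hq0 : ∀ i, 0 < q i)
    (hp1 : ∑ i, p i = 1) (hq1 : ∑ i, q i = 1) :
    (∑ i, p i * Real.log (p i)) - ∑ i, q i * Real.log (q i)
      ≥ (∑ i, (Real.log (q i) + 1) * (p i - q i)) + (1 / 2) * ∑ i, (p i - q i) ^ 2 := by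
  have entry_mem_Ioc {r : Fin N → ℝ} (hr0 : ∀ i, 0 < r i) (hr1 : ∑ i, r i = 1) (i : Fin N) :
      r i ∈ Ioc 0 1 :=
    ⟨hr0 i, hr1 ▸ Finset.single_le_sum (fun j _ ↦ (hr0 j).le) (Finset.mem_univ i)⟩
  have hsum := Finset.sum_le_sum fun i (_ : i ∈ Finset.univ) ↦
    mul_log_add_sq_div_two_le (entry_mem_Ioc hp0 hp1 i) (entry_mem_Ioc hq0 hq1 i)
  rw [Finset.sum_add_distrib, Finset.sum_add_distrib, ← Finset.sum_div] at hsum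
  linarith
end

section
/- Let F : ℝ^n → ℝ be convex and differentiable, let A ∈ ℝ^{m×n}, let ν, q ∈ ℝ^m and c > 0, and define L(p) = F(p) + ⟨ν, Ap − q⟩ + (c/2)‖Ap − q‖². Suppose p' ∈ ℝ^n satisfies the first-order condition ∇F(p') + Aᵀ(ν + c(Ap' − q)) = 0. Then for every p ∈ ℝ^n, L(p) − L(p') ≥ (c/2)‖Ap − Ap'‖². -/
/-!
Write `d = A p - A p'`. Expanding the square, `L p - L p'` equals
`F p - F p' + ⟪ν + c (A p' - q), d⟫ + (c/2)‖d‖²`. By the first-order condition the middle term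
is `-⟪∇F p', p - p'⟫`, and the tangent-line inequality of the convex function `F` makes
`F p - F p' - ⟪∇F p', p - p'⟫` nonnegative.
-/

open Matrix RealInnerProductSpace

theorem ConvexOn.le_sub_of_hasFDerivAt {E : Type*} [NormedAddCommGroup E] [NormedSpace ℝ E]
    {s : Set E} {f : E → ℝ} {f' : E →L[ℝ] ℝ} {x y : E} (hf : ConvexOn ℝ s f)
    (hx : x ∈ s) (hy : y ∈ s) (hf' : HasFDerivAt f f' x) :
    f' (y - x) ≤ f y - f x := by
  let ℓ : ℝ →ᵃ[ℝ] E := AffineMap.lineMap x y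
  have hconv : ConvexOn ℝ (ℓ ⁻¹' s) (f ∘ ℓ) := hf.comp_affineMap ℓ
  have hderiv : HasDerivAt (f ∘ ℓ) (f' (y - x)) 0 := by
    have hf'0 : HasFDerivAt f f' (ℓ 0) := by rwa [AffineMap.lineMap_apply_zero]
    exact hf'0.comp_hasDerivAt 0 AffineMap.hasDerivAt_lineMap
  have hslope := hconv.le_slope_of_hasDerivAt (by simpa [ℓ] using hx) (by simpa [ℓ] using hy)
    one_pos hderiv
  simpa [slope_def_field, ℓ] using hslope

theorem Matrix.inner_toEuclideanLin_transpose {m n : Type*} [Fintype m] [Fintype n]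
    [DecidableEq m] [DecidableEq n] (A : Matrix m n ℝ) (w : EuclideanSpace ℝ m)
    (x : EuclideanSpace ℝ n) :
    ⟪toEuclideanLin Aᵀ w, x⟫ = ⟪w, toEuclideanLin A x⟫ := by
  rw [← conjTranspose_eq_transpose_of_trivial, toEuclideanLin_conjTranspose_eq_adjoint,
    LinearMap.adjoint_inner_left]

section AugmentedLagrangian

variable {E G : Type*} [NormedAddCommGroup E] [InnerProductSpace ℝ E]
  [NormedAddCommGroup G] [InnerProductSpace ℝ G]

noncomputable def augmentedLagrangian (f : E → ℝ) (B : E →ₗ[ℝ] G) (ν q : G) (c : ℝ)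
    (x : E) : ℝ :=
  f x + ⟪ν, B x - q⟫ + c / 2 * ‖B x - q‖ ^ 2

theorem augmentedLagrangian_sub_ge {f : E → ℝ} {f' : E →L[ℝ] ℝ} {B : E →ₗ[ℝ] G} {ν q : G}
    {c : ℝ} {x' : E} (hf : ConvexOn ℝ Set.univ f) (hf' : HasFDerivAt f f' x')
    (hopt : ∀ h, f' h + ⟪ν + c • (B x' - q), B h⟫ = 0) (x : E) :
    c / 2 * ‖B x - B x'‖ ^ 2
      ≤ augmentedLagrangian f B ν q c x - augmentedLagrangian f B ν q c x' := by
  have htangent := hf.le_sub_of_hasFDerivAt (Set.mem_univ x') (Set.mem_univ x) hf'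
  have hstep := hopt (x - x')
  have hsplit : B x - q = (B x' - q) + (B x - B x') := by abel
  rw [map_sub B, inner_add_left, real_inner_smul_left] at hstep
  unfold augmentedLagrangian
  rw [hsplit, norm_add_sq_real, inner_add_right]
  linarith

end AugmentedLagrangian

theorem statement8_general {n m : ℕ} (F : EuclideanSpace ℝ (Fin n) → ℝ)
    (hFconv : ConvexOn ℝ Set.univ F) (hFdiff : Differentiable ℝ F)
    (A : Matrix (Fin m) (Fin n) ℝ) (ν q : EuclideanSpace ℝ (Fin m)) (c : ℝ)
    (L : EuclideanSpace ℝ (Fin n) → ℝ)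
    (hL : ∀ p, L p = F p + ⟪ν, Matrix.toEuclideanLin A p - q⟫
        + c / 2 * ‖Matrix.toEuclideanLin A p - q‖ ^ 2)
    (p' : EuclideanSpace ℝ (Fin n))
    (hopt : gradient F p'
        + Matrix.toEuclideanLin Aᵀ (ν + c • (Matrix.toEuclideanLin A p' - q)) = 0) :
    ∀ p, L p - L p' ≥ c / 2 * ‖Matrix.toEuclideanLin A p - Matrix.toEuclideanLin A p'‖ ^ 2 := by
  have hL' : L = augmentedLagrangian F (toEuclideanLin A) ν q c := funext hL
  have hweak : ∀ h, (InnerProductSpace.toDual ℝ _ (gradient F p')) h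
      + ⟪ν + c • (toEuclideanLin A p' - q), toEuclideanLin A h⟫ = 0 := fun h => by
    rw [InnerProductSpace.toDual_apply_apply, ← inner_toEuclideanLin_transpose, ← inner_add_left,
      hopt, inner_zero_left]
  rw [hL']
  exact augmentedLagrangian_sub_ge hFconv (hFdiff p').hasGradientAt.hasFDerivAt hweak

/-- Per-view primal-block sufficient decrease inequality for consensus ADMM:
if `F : ℝⁿ → ℝ` is convex and differentiable, `A ∈ ℝ^{m×n}`, `ν, q ∈ ℝᵐ`, `c > 0`,
`L(p) = F(p) + ⟨ν, Ap − q⟩ + (c/2)‖Ap − q‖²`, and `p'` satisfies the first-order condition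
`∇F(p') + Aᵀ(ν + c(Ap' − q)) = 0`, then `L(p) − L(p') ≥ (c/2)‖Ap − Ap'‖²` for every `p`. -/
theorem statement8 {n m : ℕ} (F : EuclideanSpace ℝ (Fin n) → ℝ)
    (hFconv : ConvexOn ℝ Set.univ F) (hFdiff : Differentiable ℝ F)
    (A : Matrix (Fin m) (Fin n) ℝ) (ν q : EuclideanSpace ℝ (Fin m)) (c : ℝ) (hc : 0 < c)
    (L : EuclideanSpace ℝ (Fin n) → ℝ)
    (hL : ∀ p, L p = F p + ⟪ν, Matrix.toEuclideanLin A p - q⟫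
        + c / 2 * ‖Matrix.toEuclideanLin A p - q‖ ^ 2)
    (p' : EuclideanSpace ℝ (Fin n))
    (hopt : gradient F p'
        + Matrix.toEuclideanLin Aᵀ (ν + c • (Matrix.toEuclideanLin A p' - q)) = 0) :
    ∀ p, L p - L p' ≥ c / 2 * ‖Matrix.toEuclideanLin A p - Matrix.toEuclideanLin A p'‖ ^ 2 :=
  statement8_general F hFconv hFdiff A ν q c L hL p' hopt
end

section
/- Let G : ℝ^m → ℝ be differentiable and σ_G-weakly convex, let V ∈ ℕ, c > 0, and for each i ∈ {1,…,V} let u_i, ν_i ∈ ℝ^m be fixed vectors. Define L(q) = G(q) + Σ_{i=1}^V [⟨ν_i, u_i − q⟩ + (c/2)‖u_i − q‖²]. Suppose q' ∈ ℝ^m satisfies the first-order condition ∇G(q') = Σ_{i=1}^V [ν_i + c(u_i − q')]. Then for every q ∈ ℝ^m, L(q) − L(q') ≥ ((cV − σ_G)/2)‖q − q'‖². -/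
/-!
Each penalty term `⟪ν, u - q⟫ + (c/2)‖u - q‖²` is a quadratic in `q` with Hessian `c`, so its
increment from `q'` to `q` is its linearisation at `q'` plus `(c/2)‖q - q'‖²`. Summing over the
`V` views, the linear parts add up to `-⟪∇G(q'), q - q'⟫` by the first-order condition, and
this cancels the linear term in the weak-convexity lower bound for `G q - G q'`.
-/

open RealInnerProductSpace

section AugmentedTerm

variable {E : Type*} [NormedAddCommGroup E] [InnerProductSpace ℝ E]

noncomputable def augmentedTerm (c : ℝ) (ν u q : E) : ℝ := ⟪ν, u - q⟫ + c / 2 * ‖u - q‖ ^ 2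

theorem augmentedTerm_sub_augmentedTerm (c : ℝ) (ν u q q' : E) :
    augmentedTerm c ν u q - augmentedTerm c ν u q'
      = -⟪ν + c • (u - q'), q - q'⟫ + c / 2 * ‖q - q'‖ ^ 2 := by
  have hsplit : u - q = (u - q') - (q - q') := by abel
  rw [augmentedTerm, augmentedTerm, hsplit, norm_sub_sq_real, inner_sub_right,
    inner_add_left, real_inner_smul_left]
  ring

theorem sum_augmentedTerm_sub_sum_augmentedTerm {ι : Type*} [Fintype ι] (c : ℝ)
    (ν u : ι → E) (q q' : E) :
    ∑ i, augmentedTerm c (ν i) (u i) q - ∑ i, augmentedTerm c (ν i) (u i) q'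
      = -⟪∑ i, (ν i + c • (u i - q')), q - q'⟫
        + Fintype.card ι * (c / 2 * ‖q - q'‖ ^ 2) := by
  rw [← Finset.sum_sub_distrib,
    Finset.sum_congr rfl fun i _ ↦ augmentedTerm_sub_augmentedTerm c (ν i) (u i) q q',
    Finset.sum_add_distrib, Finset.sum_neg_distrib, sum_inner, Finset.sum_const,
    Finset.card_univ, nsmul_eq_mul]

end AugmentedTerm

theorem statement9_general {m : ℕ} (G : EuclideanSpace ℝ (Fin m) → ℝ) (σG : ℝ)
    (hGweak : ∀ x y : EuclideanSpace ℝ (Fin m),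
      G y ≥ G x + ⟪gradient G x, y - x⟫ - σG / 2 * ‖y - x‖ ^ 2)
    (V : ℕ) (c : ℝ)
    (u ν : Fin V → EuclideanSpace ℝ (Fin m))
    (L : EuclideanSpace ℝ (Fin m) → ℝ)
    (hL : ∀ q, L q = G q + ∑ i, (⟪ν i, u i - q⟫ + c / 2 * ‖u i - q‖ ^ 2))
    (q' : EuclideanSpace ℝ (Fin m))
    (hopt : gradient G q' = ∑ i, (ν i + c • (u i - q'))) :
    ∀ q, L q - L q' ≥ (c * V - σG) / 2 * ‖q - q'‖ ^ 2 := by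
  intro q
  have hpenalty := sum_augmentedTerm_sub_sum_augmentedTerm c ν u q q'
  rw [← hopt, Fintype.card_fin] at hpenalty
  have hG := hGweak q' q
  rw [hL q, hL q']
  unfold augmentedTerm at hpenalty
  linarith

/-- Augmented-variable block sufficient decrease inequality for consensus
ADMM: if `G : ℝᵐ → ℝ` is differentiable and `σ_G`-weakly convex, `c > 0`, `u_i, ν_i ∈ ℝᵐ`
for `i ∈ {1,…,V}`, `L(q) = G(q) + ∑_i [⟨ν_i, u_i − q⟩ + (c/2)‖u_i − q‖²]`, and `q'`
satisfies `∇G(q') = ∑_i [ν_i + c(u_i − q')]`, then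
`L(q) − L(q') ≥ ((cV − σ_G)/2)‖q − q'‖²` for every `q`. -/
theorem statement9 {m : ℕ} (G : EuclideanSpace ℝ (Fin m) → ℝ) (σG : ℝ)
    (hGdiff : Differentiable ℝ G)
    (hGweak : ∀ x y : EuclideanSpace ℝ (Fin m),
      G y ≥ G x + ⟪gradient G x, y - x⟫ - σG / 2 * ‖y - x‖ ^ 2)
    (V : ℕ) (c : ℝ) (hc : 0 < c)
    (u ν : Fin V → EuclideanSpace ℝ (Fin m))
    (L : EuclideanSpace ℝ (Fin m) → ℝ)
    (hL : ∀ q, L q = G q + ∑ i, (⟪ν i, u i - q⟫ + c / 2 * ‖u i - q‖ ^ 2))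
    (q' : EuclideanSpace ℝ (Fin m))
    (hopt : gradient G q' = ∑ i, (ν i + c • (u i - q'))) :
    ∀ q, L q - L q' ≥ (c * V - σG) / 2 * ‖q - q'‖ ^ 2 :=
  statement9_general G σG hGweak V c u ν L hL q' hopt
end

section
/- Let A ∈ ℝ^{m×n} have full row rank, and let F : ℝ^n → ℝ be differentiable with L-Lipschitz gradient. Suppose p, p' ∈ ℝ^n and ν, ν' ∈ ℝ^m satisfy ∇F(p) = −Aᵀν and ∇F(p') = −Aᵀν'. Then ‖ν − ν'‖ ≤ (λ_A L/μ_{AAᵀ})‖p − p'‖, where λ_A is the largest singular value of A, μ_{AAᵀ} is the smallest singular value of AAᵀ, and ‖·‖ is the Euclidean norm. -/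
/-! With `w = ν - ν'` the optimality conditions give `Aᵀ w = ∇F(p') - ∇F(p)`, hence
`μ_{AAᵀ} ‖w‖ ≤ ‖AAᵀ w‖ ≤ λ_A ‖Aᵀ w‖ ≤ λ_A L ‖p - p'‖`. Full row rank makes `AAᵀ` invertible,
and an injective linear map on a finite-dimensional space is antilipschitz, so `μ_{AAᵀ} > 0`. -/

open Matrix

/-- The largest singular value of a real matrix `A`, via its variational characterization
`λ_A = sup_{‖x‖=1} ‖Ax‖` (Euclidean norms). -/
noncomputable def maxSingularValue {m n : ℕ} (A : Matrix (Fin m) (Fin n) ℝ) : ℝ :=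
  sSup {r : ℝ | ∃ x : EuclideanSpace ℝ (Fin n), ‖x‖ = 1 ∧ r = ‖Matrix.toEuclideanLin A x‖}

/-- The smallest singular value of a square real matrix `B`, via its variational
characterization `μ_B = inf_{‖x‖=1} ‖Bx‖` (Euclidean norms). -/
noncomputable def minSingularValue {k : ℕ} (B : Matrix (Fin k) (Fin k) ℝ) : ℝ :=
  sInf {r : ℝ | ∃ x : EuclideanSpace ℝ (Fin k), ‖x‖ = 1 ∧ r = ‖Matrix.toEuclideanLin B x‖}

namespace Matrix

theorem toEuclideanLin_injective_of_rank_eq {𝕜 ι : Type*} [RCLike 𝕜] [Fintype ι] [DecidableEq ι]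
    (B : Matrix ι ι 𝕜) (hB : B.rank = Fintype.card ι) :
    Function.Injective (toEuclideanLin B) := by
  have hsurj : Function.Surjective B.mulVecLin := by
    rw [← LinearMap.range_eq_top]
    apply Submodule.eq_top_of_finrank_eq
    rw [← rank, hB, Module.finrank_fintype_fun_eq_card]
  have hinj : Function.Injective B.mulVecLin := LinearMap.injective_iff_surjective.mpr hsurj
  intro x y hxy
  exact WithLp.ofLp_injective 2 (hinj (by simpa [toLpLin_apply] using congrArg WithLp.ofLp hxy))

theorem norm_toEuclideanLin_smul_inv_norm {ι κ : Type*} [Fintype ι] [Fintype κ] [DecidableEq κ]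
    (A : Matrix ι κ ℝ) (x : EuclideanSpace ℝ κ) :
    ‖toEuclideanLin A (‖x‖⁻¹ • x)‖ = ‖toEuclideanLin A x‖ / ‖x‖ := by
  rw [_root_.map_smul, norm_smul, norm_inv, norm_norm, inv_mul_eq_div]

end Matrix

section SingularValues

variable {m n k : ℕ}

theorem maxSingularValue_nonneg (A : Matrix (Fin m) (Fin n) ℝ) : 0 ≤ maxSingularValue A :=
  Real.sSup_nonneg fun _ ⟨_, _, hr⟩ ↦ hr ▸ norm_nonneg _

theorem norm_toEuclideanLin_le_maxSingularValue_mul (A : Matrix (Fin m) (Fin n) ℝ)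
    (x : EuclideanSpace ℝ (Fin n)) :
    ‖toEuclideanLin A x‖ ≤ maxSingularValue A * ‖x‖ := by
  rcases eq_or_ne x 0 with rfl | hx
  · simp
  let f := (toEuclideanLin A).toContinuousLinearMap
  have hbdd : BddAbove
      {r : ℝ | ∃ y : EuclideanSpace ℝ (Fin n), ‖y‖ = 1 ∧ r = ‖toEuclideanLin A y‖} := by
    refine ⟨‖f‖, ?_⟩
    rintro _ ⟨y, hy, rfl⟩
    simpa [f, hy] using f.le_opNorm y
  have hunit := le_csSup hbdd ⟨‖x‖⁻¹ • x, norm_smul_inv_norm hx, rfl⟩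
  rwa [norm_toEuclideanLin_smul_inv_norm, div_le_iff₀ (norm_pos_iff.mpr hx)] at hunit

theorem minSingularValue_nonneg (B : Matrix (Fin k) (Fin k) ℝ) : 0 ≤ minSingularValue B :=
  Real.sInf_nonneg fun _ ⟨_, _, hr⟩ ↦ hr ▸ norm_nonneg _

theorem minSingularValue_mul_norm_le (B : Matrix (Fin k) (Fin k) ℝ)
    (x : EuclideanSpace ℝ (Fin k)) :
    minSingularValue B * ‖x‖ ≤ ‖toEuclideanLin B x‖ := by
  rcases eq_or_ne x 0 with rfl | hx
  · simp
  have hbdd : BddBelow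
      {r : ℝ | ∃ y : EuclideanSpace ℝ (Fin k), ‖y‖ = 1 ∧ r = ‖toEuclideanLin B y‖} :=
    ⟨0, fun _ ⟨_, _, hr⟩ ↦ hr ▸ norm_nonneg _⟩
  have hunit := csInf_le hbdd ⟨‖x‖⁻¹ • x, norm_smul_inv_norm hx, rfl⟩
  rwa [norm_toEuclideanLin_smul_inv_norm, le_div_iff₀ (norm_pos_iff.mpr hx)] at hunit

theorem minSingularValue_pos_of_rank_eq (hk : 0 < k) (B : Matrix (Fin k) (Fin k) ℝ)
    (hB : B.rank = k) : 0 < minSingularValue B := by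
  obtain ⟨K, hK, hanti⟩ := (toEuclideanLin B).exists_antilipschitzWith <|
    LinearMap.ker_eq_bot.mpr <| toEuclideanLin_injective_of_rank_eq B <| by rwa [Fintype.card_fin]
  have hK' : (0 : ℝ) < K := hK
  refine (inv_pos.mpr hK').trans_le <|
    le_csInf ⟨_, EuclideanSpace.single ⟨0, hk⟩ 1, by simp, rfl⟩ ?_
  rintro _ ⟨x, hx, rfl⟩
  have := hanti.le_mul_norm (map_zero _) x
  rw [hx] at this
  exact (inv_le_iff_one_le_mul₀' hK').mpr this

theorem norm_le_norm_toEuclideanLin_div_minSingularValue (B : Matrix (Fin k) (Fin k) ℝ)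
    (hB : B.rank = k) (x : EuclideanSpace ℝ (Fin k)) :
    ‖x‖ ≤ ‖toEuclideanLin B x‖ / minSingularValue B := by
  rcases Nat.eq_zero_or_pos k with rfl | hk
  · simp [Subsingleton.elim x 0]
  rw [le_div_iff₀ (minSingularValue_pos_of_rank_eq hk B hB), mul_comm]
  exact minSingularValue_mul_norm_le B x

end SingularValues

theorem statement11_general {m n : ℕ} (A : Matrix (Fin m) (Fin n) ℝ) (hrank : A.rank = m)
    (F : EuclideanSpace ℝ (Fin n) → ℝ) (L : ℝ)
    (hLip : ∀ x y : EuclideanSpace ℝ (Fin n),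
      ‖gradient F x - gradient F y‖ ≤ L * ‖x - y‖)
    (p p' : EuclideanSpace ℝ (Fin n)) (ν ν' : EuclideanSpace ℝ (Fin m))
    (h1 : gradient F p = -(Matrix.toEuclideanLin Aᵀ ν))
    (h2 : gradient F p' = -(Matrix.toEuclideanLin Aᵀ ν')) :
    ‖ν - ν'‖ ≤ maxSingularValue A * L / minSingularValue (A * Aᵀ) * ‖p - p'‖ := by
  have hdual : toEuclideanLin Aᵀ (ν - ν') = gradient F p' - gradient F p := by
    rw [map_sub, h1, h2]
    abel
  have hAAt : toEuclideanLin (A * Aᵀ) (ν - ν') =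
      toEuclideanLin A (gradient F p' - gradient F p) := by
    rw [← hdual]
    simp only [toLpLin_mul_same, LinearMap.comp_apply]
  have hmin := minSingularValue_nonneg (A * Aᵀ)
  have hmax := maxSingularValue_nonneg A
  calc ‖ν - ν'‖ ≤ ‖toEuclideanLin (A * Aᵀ) (ν - ν')‖ / minSingularValue (A * Aᵀ) :=
        norm_le_norm_toEuclideanLin_div_minSingularValue _
          (by rw [rank_self_mul_transpose, hrank]) _
    _ = ‖toEuclideanLin A (gradient F p' - gradient F p)‖ / minSingularValue (A * Aᵀ) := by
        rw [hAAt]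
    _ ≤ maxSingularValue A * ‖gradient F p' - gradient F p‖ / minSingularValue (A * Aᵀ) := by
        gcongr
        exact norm_toEuclideanLin_le_maxSingularValue_mul A _
    _ ≤ maxSingularValue A * (L * ‖p - p'‖) / minSingularValue (A * Aᵀ) := by
        rw [norm_sub_rev]
        gcongr
        exact hLip p p'
    _ = maxSingularValue A * L / minSingularValue (A * Aᵀ) * ‖p - p'‖ := by ring

/-- If `A ∈ ℝ^{m×n}` has full row rank, `F : ℝⁿ → ℝ` is differentiable
with `L`-Lipschitz gradient, and `∇F(p) = −Aᵀν`, `∇F(p') = −Aᵀν'`, then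
`‖ν − ν'‖ ≤ (λ_A L / μ_{AAᵀ}) ‖p − p'‖`. -/
theorem statement11 {m n : ℕ} (A : Matrix (Fin m) (Fin n) ℝ) (hrank : A.rank = m)
    (F : EuclideanSpace ℝ (Fin n) → ℝ) (hFdiff : Differentiable ℝ F) (L : ℝ)
    (hLip : ∀ x y : EuclideanSpace ℝ (Fin n),
      ‖gradient F x - gradient F y‖ ≤ L * ‖x - y‖)
    (p p' : EuclideanSpace ℝ (Fin n)) (ν ν' : EuclideanSpace ℝ (Fin m))
    (h1 : gradient F p = -(Matrix.toEuclideanLin Aᵀ ν))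
    (h2 : gradient F p' = -(Matrix.toEuclideanLin Aᵀ ν')) :
    ‖ν - ν'‖ ≤ maxSingularValue A * L / minSingularValue (A * Aᵀ) * ‖p - p'‖ :=
  statement11_general A hrank F L hLip p p' ν ν' h1 h2
end

section
/- Let V ∈ ℕ, c > 0 with cV ≥ σ_G, and for each i ∈ {1,…,V} let A_i ∈ ℝ^{m×n_i}, let F_i : ℝ^{n_i} → ℝ be convex and differentiable, and let G : ℝ^m → ℝ be differentiable and σ_G-weakly convex. Define L_c({p_i},{ν_i},q) = Σ_{i=1}^V [F_i(p_i) + ⟨ν_i, A_i p_i − q⟩ + (c/2)‖A_i p_i − q‖²] + G(q). Suppose (p_i^*, ν_i^*, q^*) is a stationary point, i.e., A_i p_i^* = q^*, ∇F_i(p_i^*) = −A_iᵀν_i^* for all i, and ∇G(q^*) = Σ_{i=1}^V ν_i^*; and suppose (p_i, ν_i, q) satisfies ∇F_i(p_i) = −A_iᵀν_i for all i and ∇G(q) = Σ_{i=1}^V [ν_i + c(A_i p_i − q)]. Then L_c({p_i},{ν_i},q) − L_c({p_i^*},{ν_i^*},q^*) ≤ (c/2) Σ_{i=1}^V ‖A_i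 p_i − A_i p_i^*‖². -/
/-!
Convexity of `F_i` at `p_i`, together with `∇F_i(p_i) = -A_iᵀ ν_i` and feasibility `A_i p_i^* = q^*`,
gives `F_i(p_i) - F_i(p_i^*) ≤ -⟨ν_i, A_i p_i - q^*⟩`; weak convexity of `G` at `q`, together with
the formula for `∇G(q)`, bounds `G(q) - G(q^*)`. Writing `A_i p_i - q^* = (A_i p_i - q) + (q - q^*)`
and summing, the cross terms cancel and what is left is
`(c/2) ∑ ‖A_i p_i - q^*‖² - ((cV - σ_G)/2) ‖q - q^*‖²`, whose last term is nonpositive.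
-/

open Matrix RealInnerProductSpace

theorem ConvexOn.add_fderiv_sub_le {E : Type*} [NormedAddCommGroup E] [NormedSpace ℝ E]
    {s : Set E} {f : E → ℝ} {x y : E} (hf : ConvexOn ℝ s f) (hx : x ∈ s) (hy : y ∈ s)
    (hfx : DifferentiableAt ℝ f x) : f x + fderiv ℝ f x (y - x) ≤ f y := by
  let ℓ : ℝ →ᵃ[ℝ] E := AffineMap.lineMap x y
  have hℓ : HasDerivAt (f ∘ ℓ) (fderiv ℝ f x (y - x)) 0 := by
    have hfℓ : DifferentiableAt ℝ f (ℓ 0) := by simpa [ℓ] using hfx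
    simpa [ℓ] using hfℓ.hasFDerivAt.comp_hasDerivAt (0 : ℝ) AffineMap.hasDerivAt_lineMap
  have hslope := (hf.comp_affineMap ℓ).le_slope_of_hasDerivAt (x := 0) (y := 1)
    (by simpa [ℓ] using hx) (by simpa [ℓ] using hy) one_pos hℓ
  simp only [slope_def_field, Function.comp_apply, sub_zero, div_one, ℓ,
    AffineMap.lineMap_apply_zero, AffineMap.lineMap_apply_one] at hslope
  linarith

theorem ConvexOn.add_inner_gradient_sub_le {E : Type*} [NormedAddCommGroup E]
    [InnerProductSpace ℝ E] [CompleteSpace E] {s : Set E} {f : E → ℝ} {x y : E}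
    (hf : ConvexOn ℝ s f) (hx : x ∈ s) (hy : y ∈ s) (hfx : DifferentiableAt ℝ f x) :
    f x + ⟪gradient f x, y - x⟫ ≤ f y := by
  rw [inner_gradient_left]
  exact hf.add_fderiv_sub_le hx hy hfx

theorem Matrix.inner_toEuclideanLin_transpose_s13 {m k : ℕ} (A : Matrix (Fin m) (Fin k) ℝ)
    (u : EuclideanSpace ℝ (Fin m)) (w : EuclideanSpace ℝ (Fin k)) :
    ⟪toEuclideanLin Aᵀ u, w⟫ = ⟪u, toEuclideanLin A w⟫ := by
  rw [← conjTranspose_eq_transpose_of_trivial, toEuclideanLin_conjTranspose_eq_adjoint,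
    LinearMap.adjoint_inner_left]

theorem inner_sub_add_half_norm_sub_sq_eq {H : Type*} [NormedAddCommGroup H]
    [InnerProductSpace ℝ H] (c : ℝ) (ν u q q' : H) :
    ⟪ν, u - q⟫ + c / 2 * ‖u - q‖ ^ 2 =
      ⟪ν, u - q'⟫ + c / 2 * ‖u - q'‖ ^ 2 - ⟪ν + c • (u - q), q - q'⟫ - c / 2 * ‖q - q'‖ ^ 2 := by
  have hsplit : u - q' = (u - q) + (q - q') := by abel
  rw [hsplit, norm_add_sq_real, inner_add_right, inner_add_left, real_inner_smul_left]
  ring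

theorem augmented_block_sub_le {m k : ℕ} (c : ℝ) (A : Matrix (Fin m) (Fin k) ℝ)
    {F : EuclideanSpace ℝ (Fin k) → ℝ} (hF : ConvexOn ℝ Set.univ F)
    {p pstar : EuclideanSpace ℝ (Fin k)} (hFp : DifferentiableAt ℝ F p)
    {ν : EuclideanSpace ℝ (Fin m)} (hgrad : gradient F p = -(toEuclideanLin Aᵀ ν))
    (q qstar : EuclideanSpace ℝ (Fin m)) (hfeas : toEuclideanLin A pstar = qstar) :
    F p + ⟪ν, toEuclideanLin A p - q⟫ + c / 2 * ‖toEuclideanLin A p - q‖ ^ 2 - F pstar ≤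
      c / 2 * ‖toEuclideanLin A p - qstar‖ ^ 2
        - ⟪ν + c • (toEuclideanLin A p - q), q - qstar⟫ - c / 2 * ‖q - qstar‖ ^ 2 := by
  have hconv := hF.add_inner_gradient_sub_le (Set.mem_univ p) (Set.mem_univ pstar) hFp
  have hdescent : ⟪gradient F p, pstar - p⟫ = ⟪ν, toEuclideanLin A p - qstar⟫ := by
    rw [hgrad, inner_neg_left, inner_toEuclideanLin_transpose_s13, map_sub, hfeas,
      ← inner_neg_right, neg_sub]
  rw [add_assoc, inner_sub_add_half_norm_sub_sq_eq c ν _ q qstar]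
  linarith

theorem statement13_general {V m : ℕ} {n : Fin V → ℕ} (c σG : ℝ)
    (hcV : c * V ≥ σG)
    (A : (i : Fin V) → Matrix (Fin m) (Fin (n i)) ℝ)
    (F : (i : Fin V) → EuclideanSpace ℝ (Fin (n i)) → ℝ)
    (hFconv : ∀ i, ConvexOn ℝ Set.univ (F i))
    (hFdiff : ∀ i, Differentiable ℝ (F i))
    (G : EuclideanSpace ℝ (Fin m) → ℝ)
    (hGweak : ∀ x y : EuclideanSpace ℝ (Fin m),
      G y ≥ G x + ⟪gradient G x, y - x⟫ - σG / 2 * ‖y - x‖ ^ 2)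
    (Lc : ((i : Fin V) → EuclideanSpace ℝ (Fin (n i))) →
      (Fin V → EuclideanSpace ℝ (Fin m)) → EuclideanSpace ℝ (Fin m) → ℝ)
    (hLc : ∀ p ν q, Lc p ν q =
      (∑ i, (F i (p i) + ⟪ν i, Matrix.toEuclideanLin (A i) (p i) - q⟫
        + c / 2 * ‖Matrix.toEuclideanLin (A i) (p i) - q‖ ^ 2)) + G q)
    (pstar : (i : Fin V) → EuclideanSpace ℝ (Fin (n i)))
    (νstar : Fin V → EuclideanSpace ℝ (Fin m)) (qstar : EuclideanSpace ℝ (Fin m))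
    (hstat1 : ∀ i, Matrix.toEuclideanLin (A i) (pstar i) = qstar)
    (p : (i : Fin V) → EuclideanSpace ℝ (Fin (n i)))
    (ν : Fin V → EuclideanSpace ℝ (Fin m)) (q : EuclideanSpace ℝ (Fin m))
    (h1 : ∀ i, gradient (F i) (p i) = -(Matrix.toEuclideanLin (A i)ᵀ (ν i)))
    (h2 : gradient G q = ∑ i, (ν i + c • (Matrix.toEuclideanLin (A i) (p i) - q))) :
    Lc p ν q - Lc pstar νstar qstar
      ≤ c / 2 * ∑ i, ‖Matrix.toEuclideanLin (A i) (p i)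
          - Matrix.toEuclideanLin (A i) (pstar i)‖ ^ 2 := by
  have hblocks := Finset.sum_le_sum fun i (_ : i ∈ Finset.univ) ↦
    augmented_block_sub_le c (A i) (hFconv i) (hFdiff i (p i)) (h1 i) q qstar (hstat1 i)
  have hG : G q - G qstar ≤ ⟪gradient G q, q - qstar⟫ + σG / 2 * ‖q - qstar‖ ^ 2 := by
    have hweak := hGweak q qstar
    rw [norm_sub_rev, ← neg_sub q, inner_neg_right] at hweak
    linarith
  have hsq : σG * ‖q - qstar‖ ^ 2 ≤ c * V * ‖q - qstar‖ ^ 2 :=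
    mul_le_mul_of_nonneg_right hcV (sq_nonneg _)
  simp only [Finset.sum_sub_distrib, Finset.sum_const, Finset.card_univ, Fintype.card_fin,
    nsmul_eq_mul, ← Finset.mul_sum, ← sum_inner, ← h2] at hblocks
  simp only [hLc, hstat1, sub_self, inner_zero_right, norm_zero, zero_pow two_ne_zero, mul_zero,
    add_zero]
  linarith

/-- Value-gap upper bound at ADMM iterates: for the consensus augmented
Lagrangian `L_c({p_i},{ν_i},q) = ∑_i [F_i(p_i) + ⟨ν_i, A_i p_i − q⟩ + (c/2)‖A_i p_i − q‖²]
+ G(q)` with each `F_i` convex differentiable, `G` differentiable `σ_G`-weakly convex and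
`cV ≥ σ_G`, if `(p_i^*, ν_i^*, q^*)` is a stationary point and `(p_i, ν_i, q)` satisfies the
first-order conditions `∇F_i(p_i) = −A_iᵀν_i` and `∇G(q) = ∑_i [ν_i + c(A_i p_i − q)]`,
then `L_c({p_i},{ν_i},q) − L_c({p_i^*},{ν_i^*},q^*) ≤ (c/2) ∑_i ‖A_i p_i − A_i p_i^*‖²`. -/
theorem statement13 {V m : ℕ} {n : Fin V → ℕ} (c σG : ℝ) (hc : 0 < c)
    (hcV : c * V ≥ σG)
    (A : (i : Fin V) → Matrix (Fin m) (Fin (n i)) ℝ)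
    (F : (i : Fin V) → EuclideanSpace ℝ (Fin (n i)) → ℝ)
    (hFconv : ∀ i, ConvexOn ℝ Set.univ (F i))
    (hFdiff : ∀ i, Differentiable ℝ (F i))
    (G : EuclideanSpace ℝ (Fin m) → ℝ) (hGdiff : Differentiable ℝ G)
    (hGweak : ∀ x y : EuclideanSpace ℝ (Fin m),
      G y ≥ G x + ⟪gradient G x, y - x⟫ - σG / 2 * ‖y - x‖ ^ 2)
    (Lc : ((i : Fin V) → EuclideanSpace ℝ (Fin (n i))) →
      (Fin V → EuclideanSpace ℝ (Fin m)) → EuclideanSpace ℝ (Fin m) → ℝ)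
    (hLc : ∀ p ν q, Lc p ν q =
      (∑ i, (F i (p i) + ⟪ν i, Matrix.toEuclideanLin (A i) (p i) - q⟫
        + c / 2 * ‖Matrix.toEuclideanLin (A i) (p i) - q‖ ^ 2)) + G q)
    (pstar : (i : Fin V) → EuclideanSpace ℝ (Fin (n i)))
    (νstar : Fin V → EuclideanSpace ℝ (Fin m)) (qstar : EuclideanSpace ℝ (Fin m))
    (hstat1 : ∀ i, Matrix.toEuclideanLin (A i) (pstar i) = qstar)
    (hstat2 : ∀ i, gradient (F i) (pstar i) = -(Matrix.toEuclideanLin (A i)ᵀ (νstar i)))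
    (hstat3 : gradient G qstar = ∑ i, νstar i)
    (p : (i : Fin V) → EuclideanSpace ℝ (Fin (n i)))
    (ν : Fin V → EuclideanSpace ℝ (Fin m)) (q : EuclideanSpace ℝ (Fin m))
    (h1 : ∀ i, gradient (F i) (p i) = -(Matrix.toEuclideanLin (A i)ᵀ (ν i)))
    (h2 : gradient G q = ∑ i, (ν i + c • (Matrix.toEuclideanLin (A i) (p i) - q))) :
    Lc p ν q - Lc pstar νstar qstar
      ≤ c / 2 * ∑ i, ‖Matrix.toEuclideanLin (A i) (p i)
          - Matrix.toEuclideanLin (A i) (pstar i)‖ ^ 2 :=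
  statement13_general c σG hcV A F hFconv hFdiff G hGweak Lc hLc pstar νstar qstar hstat1 p ν q h1
    h2
end
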